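/- Let x_1,…,x_n be a linear decomposition of a word x that is square-free relative to π, with complementary members p_i, q_i. Then for every i with 1 ≤ i < n, it is not the case that p_i·x_i·q_i ~ p_{i+1}·x_{i+1}·q_{i+1}. -/

import Mathlib

/-! Any two words of `D̄_σ` (or of `D̄_ρ`) are `=_π`-equivalent, because all defining words of a
family system are pairwise related. Propagating the linkage conditions of the decomposition from
both ends shows that the word is `=_π`-equivalent to `V p_i x_i x_{i+1} q_{i+1} W`. As `q_i` or
`p_{i+1}` is empty, rewriting one of `p_i x_i q_i ~ p_{i+1} x_{i+1} q_{i+1}` into the other then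
produces the square of `x_{i+1} q_{i+1}` or of `p_i x_i`, which is nonempty. -/

namespace SqFreePaper

variable {A : Type*}

/-- A word is square-free if it contains no nonempty factor of the form `s ++ s`. -/
def IsSquareFreeWord (w : List A) : Prop :=
  ∀ u s v : List A, w = u ++ s ++ s ++ v → s = []

/-- One-step rewriting relation associated with a system of defining relations `π`. -/
def OneStep (π : List A → List A → Prop) (x y : List A) : Prop :=
  ∃ r s u v : List A, x = r ++ u ++ s ∧ y = r ++ v ++ s ∧ (π u v ∨ π v u)

/-- The congruence `=_π` generated by `π`: reflexive-transitive closure of one-step rewriting. -/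
def EqRel (π : List A → List A → Prop) : List A → List A → Prop :=
  Relation.ReflTransGen (OneStep π)

/-- `w` is square-free relative to `π`: every word in its `=_π`-class is square-free. -/
def SFRel (π : List A → List A → Prop) (w : List A) : Prop :=
  ∀ z, EqRel π w z → IsSquareFreeWord z

/-- Union of two systems of defining relations. -/
def PiRel (σ ρ : List A → List A → Prop) (x y : List A) : Prop := σ x y ∨ ρ x y

/-- The set of defining words of a system `σ`. -/
def DWords (σ : List A → List A → Prop) : Set (List A) :=
  {x | ∃ y, σ x y ∨ σ y x}

/-- The closure of `D_σ` under the congruence `=_ρ`. -/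
def ClosureD (σ ρ : List A → List A → Prop) : Set (List A) :=
  {x | ∃ w ∈ DWords σ, EqRel ρ w x}

/-- The system `{(u_i, u_j) : i < j}` determined by a finite family of words. -/
def FamilyRel {n : ℕ} (u : Fin n → List A) (x y : List A) : Prop :=
  ∃ i j : Fin n, i < j ∧ x = u i ∧ y = u j

/-- `x ~ y` iff both lie in `D̄_σ` or both lie in `D̄_ρ`. -/
def Sim (σ ρ : List A → List A → Prop) (x y : List A) : Prop :=
  (x ∈ ClosureD σ ρ ∧ y ∈ ClosureD σ ρ) ∨ (x ∈ ClosureD ρ σ ∧ y ∈ ClosureD ρ σ)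

/-- `D_τ = D̄_σ ∪ D̄_ρ`. -/
def DTau (σ ρ : List A → List A → Prop) : Set (List A) :=
  ClosureD σ ρ ∪ ClosureD ρ σ

/-- The concatenation `x_a ++ x_{a+1} ++ ⋯ ++ x_{a+len-1}`. -/
def wordSeg (x : ℕ → List A) (a len : ℕ) : List A :=
  ((List.range' a len).map x).flatten

/-- Standing hypotheses of the paper: `D̄_σ`, `D̄_ρ` are finite, nonempty, disjoint,
and closed under `=_σ`, `=_ρ` respectively. -/
def SettingHyps (σ ρ : List A → List A → Prop) : Prop :=
  (ClosureD σ ρ).Finite ∧ (ClosureD ρ σ).Finite ∧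
  (ClosureD σ ρ).Nonempty ∧ (ClosureD ρ σ).Nonempty ∧
  (ClosureD σ ρ ∩ ClosureD ρ σ = ∅) ∧
  (∀ x ∈ ClosureD σ ρ, ∀ y, EqRel σ x y → y ∈ ClosureD σ ρ) ∧
  (∀ x ∈ ClosureD ρ σ, ∀ y, EqRel ρ x y → y ∈ ClosureD ρ σ)

/-- `x_1, …, x_n` (with complementary members `p_i`, `q_i`) is a linear decomposition. -/
def IsLinDecomp (σ ρ : List A → List A → Prop) (n : ℕ) (x p q : ℕ → List A) : Prop :=
  1 ≤ n ∧
  (∀ i, 1 ≤ i → i ≤ n → x i ≠ []) ∧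
  (∃ u v : ℕ → List A,
    (∀ i, 1 < i → i ≤ n → Sim σ ρ (p i ++ x i ++ q i) (q (i-1) ++ u i)) ∧
    (∀ i, 1 ≤ i → i < n → Sim σ ρ (p i ++ x i ++ q i) (v i ++ p (i+1)))) ∧
  (∀ i, 1 ≤ i → i < n → q i = [] ∨ p (i+1) = []) ∧
  p 1 = [] ∧ q n = [] ∧ (n = 1 → x 1 ∈ DTau σ ρ)

/-- `Lin(n)`: words with a linear decomposition of at most `n` members. -/
def LinSet (σ ρ : List A → List A → Prop) (n : ℕ) : Set (List A) :=
  {w | ∃ m, 1 ≤ m ∧ m ≤ n ∧ ∃ x p q, IsLinDecomp σ ρ m x p q ∧ w = wordSeg x 1 m}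

/-- `Lin = ⋃ₙ Lin(n)`: linearly decomposable words. -/
def LinAll (σ ρ : List A → List A → Prop) : Set (List A) :=
  {w | ∃ n, w ∈ LinSet σ ρ n}

/-- Occurrence `(r, d, s)` contains occurrence `(p, e, q)` (of the same word)
iff `|r| ≤ |p|` and `|s| ≤ |q|`. -/
def Contained (p q r s : List A) : Prop := r.length ≤ p.length ∧ s.length ≤ q.length

/-- Two occurrences in `w` overlap iff some occurrence of a nonempty word is
contained in both. -/
def Overlap (w p q r s : List A) : Prop :=
  ∃ a f b : List A, f ≠ [] ∧ w = a ++ f ++ b ∧ Contained a b p q ∧ Contained a b r s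

/-- `(p, e, q)` is a maximal occurrence in `w` of a word `e` in the set `L`. -/
def MaximalOcc (L : Set (List A)) (w p e q : List A) : Prop :=
  w = p ++ e ++ q ∧ e ∈ L ∧
  ∀ r d s, w = r ++ d ++ s → d ∈ L → Contained p q r s → r = p ∧ d = e ∧ s = q

section Congruence

variable {π π' : List A → List A → Prop} {x y z : List A}

theorem OneStep.symm (h : OneStep π x y) : OneStep π y x := by
  obtain ⟨r, s, a, b, rfl, rfl, hab⟩ := h
  exact ⟨r, s, b, a, rfl, rfl, hab.symm⟩

theorem OneStep.mono (hππ' : ∀ a b, π a b → π' a b) (h : OneStep π x y) : OneStep π' x y := by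
  obtain ⟨r, s, a, b, rfl, rfl, hab⟩ := h
  exact ⟨r, s, a, b, rfl, rfl, hab.imp (hππ' a b) (hππ' b a)⟩

theorem OneStep.append_append (r s : List A) (h : OneStep π x y) :
    OneStep π (r ++ x ++ s) (r ++ y ++ s) := by
  obtain ⟨r', s', a, b, rfl, rfl, hab⟩ := h
  exact ⟨r ++ r', s' ++ s, a, b, by simp, by simp, hab⟩

theorem EqRel.of_eq (h : x = y) : EqRel π x y := h ▸ Relation.ReflTransGen.refl

theorem EqRel.trans (hxy : EqRel π x y) (hyz : EqRel π y z) : EqRel π x z :=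
  Relation.ReflTransGen.trans hxy hyz

theorem EqRel.symm (h : EqRel π x y) : EqRel π y x :=
  haveI : Std.Symm (OneStep π) := ⟨fun _ _ => OneStep.symm⟩
  Std.Symm.symm (r := Relation.ReflTransGen (OneStep π)) _ _ h

theorem EqRel.mono (hππ' : ∀ a b, π a b → π' a b) (h : EqRel π x y) : EqRel π' x y :=
  Relation.ReflTransGen.mono (fun _ _ => OneStep.mono hππ') _ _ h

theorem EqRel.append_append (r s : List A) (h : EqRel π x y) :
    EqRel π (r ++ x ++ s) (r ++ y ++ s) :=
  Relation.ReflTransGen.lift (fun w => r ++ w ++ s) (fun _ _ => OneStep.append_append r s) _ _ h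

end Congruence

theorem eqRel_familyRel {m : ℕ} (u : Fin m → List A) (i j : Fin m) :
    EqRel (FamilyRel u) (u i) (u j) := by
  have step {i j : Fin m} (hij : i < j) : EqRel (FamilyRel u) (u i) (u j) :=
    .single ⟨[], [], u i, u j, by simp, by simp, .inl ⟨i, j, hij, rfl, rfl⟩⟩
  rcases lt_trichotomy i j with hij | rfl | hji
  exacts [step hij, .of_eq rfl, (step hji).symm]

theorem mem_dWords_familyRel {m : ℕ} {u : Fin m → List A} {w : List A}
    (h : w ∈ DWords (FamilyRel u)) : ∃ i, w = u i := by
  obtain ⟨_, ⟨i, j, -, rfl, -⟩ | ⟨i, j, -, -, rfl⟩⟩ := h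
  exacts [⟨i, rfl⟩, ⟨j, rfl⟩]

theorem eqRel_of_mem_closureD_familyRel {m : ℕ} {u : Fin m → List A}
    {ρ π : List A → List A → Prop} (hu : ∀ a b, FamilyRel u a b → π a b)
    (hρ : ∀ a b, ρ a b → π a b) {z z' : List A}
    (hz : z ∈ ClosureD (FamilyRel u) ρ) (hz' : z' ∈ ClosureD (FamilyRel u) ρ) :
    EqRel π z z' := by
  obtain ⟨_, hw, hwz⟩ := hz
  obtain ⟨_, hw', hwz'⟩ := hz'
  obtain ⟨i, rfl⟩ := mem_dWords_familyRel hw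
  obtain ⟨j, rfl⟩ := mem_dWords_familyRel hw'
  exact ((hwz.mono hρ).symm.trans ((eqRel_familyRel u i j).mono hu)).trans (hwz'.mono hρ)

theorem Sim.eqRel_piRel {mu mv : ℕ} {u : Fin mu → List A} {v : Fin mv → List A}
    {z z' : List A} (h : Sim (FamilyRel u) (FamilyRel v) z z') :
    EqRel (PiRel (FamilyRel u) (FamilyRel v)) z z' := by
  rcases h with ⟨hz, hz'⟩ | ⟨hz, hz'⟩
  · exact eqRel_of_mem_closureD_familyRel (fun _ _ => .inl) (fun _ _ => .inr) hz hz'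
  · exact eqRel_of_mem_closureD_familyRel (fun _ _ => .inr) (fun _ _ => .inl) hz hz'

section WordSeg

variable (x : ℕ → List A)

theorem wordSeg_one (a : ℕ) : wordSeg x a 1 = x a := by
  simp [wordSeg]

theorem wordSeg_add (a m k : ℕ) :
    wordSeg x a (m + k) = wordSeg x a m ++ wordSeg x (a + m) k := by
  simp [wordSeg, ← List.range'_append_1]

theorem wordSeg_succ (a m : ℕ) : wordSeg x a (m + 1) = wordSeg x a m ++ x (a + m) := by
  rw [wordSeg_add, wordSeg_one]

theorem wordSeg_succ' (a m : ℕ) : wordSeg x a (m + 1) = x a ++ wordSeg x (a + 1) m := by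
  rw [Nat.add_comm, wordSeg_add, wordSeg_one]

end WordSeg

namespace IsLinDecomp

variable {σ ρ π : List A → List A → Prop} {n : ℕ} {x p q : ℕ → List A}

theorem exists_eqRel_wordSeg_prefix (hlin : IsLinDecomp σ ρ n x p q)
    (hsim : ∀ z z', Sim σ ρ z z' → EqRel π z z') {k : ℕ} (hk : 1 ≤ k) (hkn : k ≤ n) :
    ∃ V, EqRel π (wordSeg x 1 k) (V ++ p k ++ x k) := by
  obtain ⟨-, -, ⟨-, v, -, hv⟩, hqp, hp1, -, -⟩ := hlin
  induction k, hk using Nat.le_induction with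
  | base => exact ⟨[], .of_eq (by simp [wordSeg_one, hp1])⟩
  | succ k hk ih =>
    obtain ⟨V, hV⟩ := ih (by omega)
    have hV' : EqRel π (wordSeg x 1 (k + 1)) (V ++ p k ++ x k ++ x (k + 1)) := by
      simpa [wordSeg_succ, Nat.add_comm 1 k] using hV.append_append [] (x (k + 1))
    rcases hqp k hk (by omega) with hq | hp
    · have hstep := (hsim _ _ (hv k hk (by omega))).append_append V (x (k + 1))
      simp only [hq, List.append_nil, List.append_assoc] at hV' hstep
      exact ⟨V ++ v k, by simpa using hV'.trans hstep⟩
    · exact ⟨V ++ p k ++ x k, by simpa [hp] using hV'⟩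

theorem exists_eqRel_wordSeg_suffix (hlin : IsLinDecomp σ ρ n x p q)
    (hsim : ∀ z z', Sim σ ρ z z' → EqRel π z z') {k : ℕ} (hk : 1 ≤ k) (hkn : k ≤ n) :
    ∃ W, EqRel π (wordSeg x k (n + 1 - k)) (x k ++ q k ++ W) := by
  obtain ⟨-, -, ⟨u, -, hu, -⟩, hqp, -, hqn, -⟩ := hlin
  induction hkn using Nat.decreasingInduction with
  | self => exact ⟨[], .of_eq (by simp [wordSeg_one, hqn])⟩
  | of_succ k hkn ih =>
    obtain ⟨W, hW⟩ := ih (by omega)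
    have hW' : EqRel π (wordSeg x k (n + 1 - k)) (x k ++ x (k + 1) ++ q (k + 1) ++ W) := by
      rw [show n + 1 - k = n + 1 - (k + 1) + 1 by omega, wordSeg_succ']
      simpa using hW.append_append (x k) []
    rcases hqp k hk hkn with hq | hp
    · exact ⟨x (k + 1) ++ q (k + 1) ++ W, by simpa [hq] using hW'⟩
    · have hstep := (hsim _ _ (hu (k + 1) (by omega) (by omega))).append_append (x k) W
      simp only [hp, List.nil_append, Nat.add_sub_cancel, List.append_assoc] at hW' hstep
      exact ⟨u (k + 1) ++ W, by simpa using hW'.trans hstep⟩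

theorem exists_eqRel_wordSeg_consecutive (hlin : IsLinDecomp σ ρ n x p q)
    (hsim : ∀ z z', Sim σ ρ z z' → EqRel π z z') {i : ℕ} (hi : 1 ≤ i) (hin : i < n) :
    ∃ V W, EqRel π (wordSeg x 1 n) (V ++ p i ++ x i ++ (x (i + 1) ++ q (i + 1)) ++ W) := by
  obtain ⟨V, hV⟩ := hlin.exists_eqRel_wordSeg_prefix hsim hi hin.le
  obtain ⟨W, hW⟩ := hlin.exists_eqRel_wordSeg_suffix hsim (k := i + 1) (by omega) hin
  refine ⟨V, W, ?_⟩
  have hsplit := wordSeg_add x 1 i (n + 1 - (i + 1))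
  rw [show i + (n + 1 - (i + 1)) = n by omega, Nat.add_comm 1 i] at hsplit
  rw [hsplit]
  have hV' := hV.append_append [] (wordSeg x (i + 1) (n + 1 - (i + 1)))
  have hW' := hW.append_append (V ++ p i ++ x i) []
  simp only [List.nil_append, List.append_nil, List.append_assoc] at hV' hW' ⊢
  exact hV'.trans hW'

end IsLinDecomp

theorem linDecomp_no_consecutive_sim_general {A : Type*} {nu nv : ℕ}
    (u : Fin nu → List A) (v : Fin nv → List A)
    (σ ρ : List A → List A → Prop) (hσ : σ = FamilyRel u) (hρ : ρ = FamilyRel v)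
    (n : ℕ) (x p q : ℕ → List A) (hlin : IsLinDecomp σ ρ n x p q)
    (hsf : SFRel (PiRel σ ρ) (wordSeg x 1 n)) :
    ∀ i, 1 ≤ i → i < n →
      ¬ Sim σ ρ (p i ++ x i ++ q i) (p (i+1) ++ x (i+1) ++ q (i+1)) := by
  subst hσ hρ
  intro i hi hin hsim
  obtain ⟨V, W, hw⟩ := hlin.exists_eqRel_wordSeg_consecutive (fun _ _ => Sim.eqRel_piRel) hi hin
  obtain ⟨-, hx, -, hqp, -⟩ := hlin
  have hpxq := hsim.eqRel_piRel
  rcases hqp i hi hin with hq | hp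
  · have hstep := hpxq.append_append V (x (i + 1) ++ q (i + 1) ++ W)
    simp only [hq, List.append_nil, List.append_assoc] at hw hstep
    have hsq := hsf _ (hw.trans hstep) (V ++ p (i + 1)) (x (i + 1) ++ q (i + 1)) W (by simp)
    exact hx (i + 1) (by omega) hin (List.append_eq_nil_iff.mp hsq).1
  · have hstep := hpxq.symm.append_append (V ++ p i ++ x i) W
    simp only [hp, List.nil_append, List.append_assoc] at hw hstep
    have hsq := hsf _ (hw.trans hstep) V (p i ++ x i) (q i ++ W) (by simp)
    exact hx i hi hin.le (List.append_eq_nil_iff.mp hsq).2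

/-- Lemma 3: in a linear decomposition of a word square-free relative
to `π`, consecutive members satisfy `¬(p_i·x_i·q_i ~ p_{i+1}·x_{i+1}·q_{i+1})`. -/
theorem linDecomp_no_consecutive_sim {A : Type*} {nu nv : ℕ}
    (u : Fin nu → List A) (v : Fin nv → List A)
    (hu : Function.Injective u) (hv : Function.Injective v)
    (σ ρ : List A → List A → Prop) (hσ : σ = FamilyRel u) (hρ : ρ = FamilyRel v)
    (hset : SettingHyps σ ρ)
    (n : ℕ) (x p q : ℕ → List A) (hlin : IsLinDecomp σ ρ n x p q)
    (hsf : SFRel (PiRel σ ρ) (wordSeg x 1 n)) :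
    ∀ i, 1 ≤ i → i < n →
      ¬ Sim σ ρ (p i ++ x i ++ q i) (p (i+1) ++ x (i+1) ++ q (i+1)) :=
  linDecomp_no_consecutive_sim_general u v σ ρ hσ hρ n x p q hlin hsf

end SqFreePaper
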